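/- Let V = V₁ ⊕ V₂ be an orthogonal direct sum of Hilbert C*-modules. Then V has the property (mBS2) if and only if both V₁ and V₂ have the property (mBS2). -/

import Mathlib

/-!
Both directions go through weak convergence `⟪z, x n⟫ → ⟪z, l⟫`. Since `V₁ ⟂ V₂` and
`V₁ + V₂ = E`, the functional `⟪z, ·⟫` restricted to `Vᵢ` is `⟪zᵢ, ·⟫` for the `Vᵢ`-component
`zᵢ` of `z`, so a sequence in `Vᵢ` is weakly Cauchy against `Vᵢ` iff it is against `E`.
Conversely, (mBS2) on `Vᵢ` makes the `Vᵢ`-component of a weakly Cauchy sequence weakly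
convergent (the norm limit of Cesàro means is the weak limit), so the sequence itself converges
weakly. Finally every weakly convergent sequence `x → l` has the Banach–Saks property:
`y := x - l` is bounded (uniform boundedness principle), and along a subsequence with
`‖⟪y i, y j⟫‖ ≤ 2⁻ⁱ` for `i < j` the partial sums satisfy `‖∑_{i<n} y i‖² ≤ n (M² + 4)`.
-/

open Filter Topology

/-- The class `CStarModule` of Mathlib (December 2024): a Hilbert C*-module with a *right*
action of `A` (given as `SMul Aᵐᵒᵖ E`), with `A`-valued inner product linear in the second
argument. -/
class RightCStarModule (A : outParam <| Type*) (E : Type*) [NonUnitalSemiring A] [StarRing A]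
    [Module ℂ A] [AddCommGroup E] [Module ℂ E] [PartialOrder A] [SMul Aᵐᵒᵖ E] [Norm A] [Norm E]
    extends Inner A E where
  inner_add_right {x} {y} {z} : inner x (y + z) = inner x y + inner x z
  inner_self_nonneg {x} : 0 ≤ inner x x
  inner_self {x} : inner x x = 0 ↔ x = 0
  inner_op_smul_right {a : A} {x y : E} : inner x (MulOpposite.op a • y) = inner x y * a
  inner_smul_right_complex {z : ℂ} {x} {y} : inner x (z • y) = z • inner x y
  star_inner x y : star (inner x y) = inner y x
  norm_eq_sqrt_norm_inner_self x : ‖x‖ = Real.sqrt ‖inner x x‖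

variable (A : Type*) {E : Type*} [NonUnitalCStarAlgebra A] [PartialOrder A] [StarOrderedRing A]
  [NormedAddCommGroup E] [NormedSpace ℂ E] [SMul Aᵐᵒᵖ E] [RightCStarModule A E]

/-- A subset `S` of a Hilbert C*-module has property (mBS2) if every sequence in `S` which
is Cauchy for all the seminorms `x ↦ ‖⟪z, x⟫‖`, `z ∈ S`, admits a subsequence whose Cesàro
means converge in norm. -/
def MBS2On (S : Set E) : Prop :=
  ∀ x : ℕ → E, (∀ n, x n ∈ S) →
    (∀ z ∈ S, CauchySeq fun n => (inner A z (x n) : A)) →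
    ∃ φ : ℕ → ℕ, StrictMono φ ∧ ∃ l : E,
      Filter.Tendsto (fun k => (((k : ℕ) + 1 : ℝ))⁻¹ • ∑ i ∈ Finset.range (k + 1), x (φ i))
        Filter.atTop (𝓝 l)

variable {A}

open RightCStarModule

section Cesaro

variable {X : Type*}

noncomputable def cesaroMean [AddCommMonoid X] [Module ℝ X] (u : ℕ → X) (k : ℕ) : X :=
  ((k : ℝ) + 1)⁻¹ • ∑ i ∈ Finset.range (k + 1), u i

lemma cesaroMean_add_const [AddCommGroup X] [Module ℝ X] (u : ℕ → X) (c : X) (k : ℕ) :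
    cesaroMean (fun n => u n + c) k = cesaroMean u k + c := by
  have hk : ((k : ℝ) + 1) ≠ 0 := by positivity
  simp only [cesaroMean, Finset.sum_add_distrib, Finset.sum_const, Finset.card_range, smul_add,
    ← Nat.cast_smul_eq_nsmul ℝ, smul_smul, Nat.cast_add, Nat.cast_one, inv_mul_cancel₀ hk,
    one_smul]

lemma Filter.Tendsto.cesaroMean [NormedAddCommGroup X] [NormedSpace ℝ X] {u : ℕ → X} {l : X}
    (h : Tendsto u atTop (𝓝 l)) : Tendsto (cesaroMean u) atTop (𝓝 l) := by
  have h' := h.cesaro_smul.comp (tendsto_add_atTop_nat 1)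
  simp only [Function.comp_def, Nat.cast_add, Nat.cast_one] at h'
  exact h'

lemma tendsto_cesaroMean_zero_of_norm_sq_le [NormedAddCommGroup X] [NormedSpace ℝ X]
    {u : ℕ → X} {C : ℝ} (h : ∀ n, ‖∑ i ∈ Finset.range n, u i‖ ^ 2 ≤ n * C) :
    Tendsto (cesaroMean u) atTop (𝓝 0) := by
  have hbound (k : ℕ) : ‖cesaroMean u k‖ ≤ √(C / ((k : ℝ) + 1)) := by
    refine (le_abs_self _).trans (Real.abs_le_sqrt ?_)
    calc ‖cesaroMean u k‖ ^ 2
        = (((k : ℝ) + 1) ^ 2)⁻¹ * ‖∑ i ∈ Finset.range (k + 1), u i‖ ^ 2 := by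
          rw [cesaroMean, norm_smul, mul_pow, Real.norm_of_nonneg (by positivity), inv_pow]
      _ ≤ (((k : ℝ) + 1) ^ 2)⁻¹ * (((k : ℝ) + 1) * C) := by
          gcongr
          exact_mod_cast h (k + 1)
      _ = C / ((k : ℝ) + 1) := by field_simp
  have hC : Tendsto (fun k : ℕ => C / ((k : ℝ) + 1)) atTop (𝓝 0) := by
    simpa [Function.comp_def] using
      (tendsto_const_div_atTop_nhds_zero_nat C).comp (tendsto_add_atTop_nat 1)
  refine squeeze_zero_norm hbound ?_
  simpa [Function.comp_def] using (Real.continuous_sqrt.tendsto 0).comp hC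

end Cesaro

section

variable {A E : Type*} [NonUnitalCStarAlgebra A] [PartialOrder A]
  [NormedAddCommGroup E] [NormedSpace ℂ E] [SMul Aᵐᵒᵖ E] [RightCStarModule A E]

namespace RightCStarModule

lemma inner_add_left {x y z : E} : inner A (x + y) z = inner A x z + inner A y z := by
  rw [← star_inner, inner_add_right, star_add, star_inner, star_inner]

lemma inner_op_smul_left {a : A} {x y : E} :
    inner A (MulOpposite.op a • x) y = star a * inner A x y := by
  rw [← star_inner, inner_op_smul_right, star_mul, star_inner]

def innerₗ (x : E) : E →ₗ[ℂ] A where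
  toFun := inner A x
  map_add' _ _ := inner_add_right
  map_smul' _ _ := inner_smul_right_complex

lemma innerₗ_apply (x y : E) : innerₗ x y = inner A x y := rfl

lemma inner_sub_right {x y z : E} : inner A x (y - z) = inner A x y - inner A x z :=
  map_sub (innerₗ x) y z

lemma inner_sub_left {x y z : E} : inner A (x - y) z = inner A x z - inner A y z := by
  rw [← star_inner, inner_sub_right, star_sub, star_inner, star_inner]

lemma inner_sum_right {ι : Type*} {s : Finset ι} {x : E} {y : ι → E} :
    inner A x (∑ i ∈ s, y i) = ∑ i ∈ s, inner A x (y i) :=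
  map_sum (innerₗ x) y s

lemma inner_sum_left {ι : Type*} {s : Finset ι} {x : ι → E} {y : E} :
    inner A (∑ i ∈ s, x i) y = ∑ i ∈ s, inner A (x i) y := by
  simp only [← star_inner y, inner_sum_right, star_sum]

lemma inner_smul_right_real {r : ℝ} {x y : E} : inner A x (r • y) = r • inner A x y :=
  (innerₗ x).map_smul_of_tower r y

lemma inner_smul_left_real {r : ℝ} {x y : E} : inner A (r • x) y = r • inner A x y := by
  rw [← star_inner, inner_smul_right_real, star_smul, star_trivial, star_inner]

lemma norm_sq_eq (x : E) : ‖x‖ ^ 2 = ‖inner A x x‖ := by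
  rw [norm_eq_sqrt_norm_inner_self (A := A) x, Real.sq_sqrt (norm_nonneg _)]

lemma norm_inner_symm (x y : E) : ‖inner A x y‖ = ‖inner A y x‖ := by
  rw [← star_inner x y, norm_star]

lemma inner_cesaroMean (z : E) (u : ℕ → E) (k : ℕ) :
    inner A z (cesaroMean u k) = cesaroMean (fun n => inner A z (u n)) k := by
  rw [cesaroMean, cesaroMean, inner_smul_right_real, inner_sum_right]

lemma norm_add_sq_le (x y : E) : ‖x + y‖ ^ 2 ≤ ‖x‖ ^ 2 + 2 * ‖inner A x y‖ + ‖y‖ ^ 2 := by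
  rw [norm_sq_eq (A := A), inner_add_left, inner_add_right, inner_add_right, norm_sq_eq x,
    norm_sq_eq y]
  linarith [norm_add_le (inner A x x + inner A x y) (inner A y x + inner A y y),
    norm_add_le (inner A x x) (inner A x y), norm_add_le (inner A y x) (inner A y y),
    norm_inner_symm (A := A) x y]

lemma norm_sq_sum_range_le {y : ℕ → E} {M : ℝ} (hM : ∀ n, ‖y n‖ ≤ M)
    (hy : ∀ i j, i < j → ‖inner A (y i) (y j)‖ ≤ (1 / 2 : ℝ) ^ i) (n : ℕ) :
    ‖∑ i ∈ Finset.range n, y i‖ ^ 2 ≤ n * (M ^ 2 + 4) := by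
  induction n with
  | zero => simp
  | succ n ih =>
    have hcross : ‖inner A (∑ i ∈ Finset.range n, y i) (y n)‖ ≤ 2 := by
      rw [inner_sum_left]
      calc _ ≤ ∑ i ∈ Finset.range n, ‖inner A (y i) (y n)‖ := norm_sum_le _ _
        _ ≤ ∑ i ∈ Finset.range n, (1 / 2 : ℝ) ^ i :=
          Finset.sum_le_sum fun i hi => hy i n (Finset.mem_range.mp hi)
        _ ≤ 2 := sum_geometric_two_le n
    have hyn : ‖y n‖ ^ 2 ≤ M ^ 2 := pow_le_pow_left₀ (norm_nonneg _) (hM n) 2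
    rw [Finset.sum_range_succ]
    push_cast
    linarith [norm_add_sq_le (A := A) (∑ i ∈ Finset.range n, y i) (y n)]

variable (A) in
def WeakTendsto (x : ℕ → E) (l : E) : Prop :=
  ∀ z : E, Tendsto (fun n => inner A z (x n)) atTop (𝓝 (inner A z l))

lemma WeakTendsto.add {x y : ℕ → E} {l m : E} (hx : WeakTendsto A x l)
    (hy : WeakTendsto A y m) : WeakTendsto A (fun n => x n + y n) (l + m) := fun z => by
  simpa only [inner_add_right] using (hx z).add (hy z)

lemma WeakTendsto.sub_const {x : ℕ → E} {l : E} (h : WeakTendsto A x l) (c : E) :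
    WeakTendsto A (fun n => x n - c) (l - c) := fun z => by
  simpa only [inner_sub_right] using (h z).sub_const (inner A z c)

lemma exists_mem_inner_eq_of_orthogonal {S T : Set E}
    (horth : ∀ y ∈ T, ∀ x ∈ S, inner A y x = 0) (hsum : ∀ v, ∃ x ∈ S, ∃ y ∈ T, v = x + y)
    (z : E) : ∃ s ∈ S, ∀ x ∈ S, inner A z x = inner A s x := by
  obtain ⟨s, hs, t, ht, rfl⟩ := hsum z
  exact ⟨s, hs, fun x hx => by rw [inner_add_left, horth t ht x hx, add_zero]⟩

lemma WeakTendsto.exists_strictMono_norm_inner_le {y : ℕ → E} (h : WeakTendsto A y 0) :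
    ∃ φ : ℕ → ℕ, StrictMono φ ∧
      ∀ i j, i < j → ‖inner A (y (φ i)) (y (φ j))‖ ≤ (1 / 2 : ℝ) ^ i := by
  obtain ⟨φ, hφ, hφr, -⟩ := hasAntitoneBasis_atTop.subbasis_with_rel
    (r := fun m n => ‖inner A (y m) (y n)‖ ≤ (1 / 2 : ℝ) ^ m) fun m => by
      have hm := (h (y m)).norm
      rw [← innerₗ_apply, map_zero, norm_zero] at hm
      exact (hm.eventually_lt_const (by positivity)).mono fun _ => le_of_lt
  refine ⟨φ, hφ, fun i j hij => (hφr hij).trans ?_⟩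
  exact pow_le_pow_of_le_one (by norm_num) (by norm_num) (hφ.id_le i)

end RightCStarModule

lemma MBS2On.of_univ {S : Set E} (hS : ∀ z, ∃ s ∈ S, ∀ x ∈ S, inner A z x = inner A s x)
    (h : MBS2On A (Set.univ : Set E)) : MBS2On A S := fun x hx hC =>
  h x (fun _ => trivial) fun z _ => by
    obtain ⟨s, hs, hzs⟩ := hS z
    have hzx : (fun n => inner A z (x n)) = fun n => inner A s (x n) :=
      funext fun n => hzs _ (hx n)
    exact hzx ▸ hC s hs

end

namespace RightCStarModule

lemma inner_mul_inner_swap_le (x y : E) :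
    inner A y x * inner A x y ≤ ‖x‖ ^ 2 • inner A y y := by
  rcases eq_or_ne x 0 with rfl | hx
  · simp [← innerₗ_apply]
  have key : ∀ a : A, (0 : A) ≤ ‖x‖ ^ 2 • (star a * a) - ‖x‖ ^ 2 • (star a * inner A x y)
      - ‖x‖ ^ 2 • (inner A y x * a) + ‖x‖ ^ 2 • (‖x‖ ^ 2 • inner A y y) := fun a =>
    calc (0 : A) ≤ inner A (MulOpposite.op a • x - ‖x‖ ^ 2 • y)
          (MulOpposite.op a • x - ‖x‖ ^ 2 • y) := inner_self_nonneg
      _ = star a * (inner A x x * a) - ‖x‖ ^ 2 • (star a * inner A x y)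
          - ‖x‖ ^ 2 • (inner A y x * a) + ‖x‖ ^ 2 • (‖x‖ ^ 2 • inner A y y) := by
        simp only [inner_sub_right, inner_sub_left, inner_op_smul_right, inner_op_smul_left,
          inner_smul_left_real, inner_smul_right_real, smul_mul_assoc, smul_sub, sub_mul,
          mul_assoc]
        abel
      _ ≤ _ := by
        gcongr
        rw [← mul_assoc, norm_sq_eq]
        exact CStarAlgebra.star_left_conjugate_le_norm_smul (star_inner x x)
  specialize key (inner A x y)
  simp only [star_inner, sub_self, zero_sub, le_neg_add_iff_add_le, add_zero] at key
  rwa [smul_le_smul_iff_of_pos_left (pow_pos (norm_pos_iff.mpr hx) _)] at key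

lemma norm_inner_le (x y : E) : ‖inner A x y‖ ≤ ‖x‖ * ‖y‖ := by
  refine le_of_sq_le_sq ?_ (by positivity)
  calc ‖inner A x y‖ ^ 2 = ‖inner A y x * inner A x y‖ := by
        rw [← star_inner x y, CStarRing.norm_star_mul_self, pow_two]
    _ ≤ ‖‖x‖ ^ 2 • inner A y y‖ := by
        refine CStarAlgebra.norm_le_norm_of_nonneg_of_le ?_ (inner_mul_inner_swap_le x y)
        rw [← star_inner x y]
        exact star_mul_self_nonneg _
    _ = (‖x‖ * ‖y‖) ^ 2 := by
        rw [norm_smul, norm_pow, norm_norm, ← norm_sq_eq, mul_pow]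

noncomputable def innerSL (x : E) : E →L[ℂ] A :=
  (innerₗ x).mkContinuous ‖x‖ (norm_inner_le x)

lemma innerSL_apply (x y : E) : innerSL x y = inner A x y := rfl

lemma continuous_inner_right (x : E) : Continuous (inner A x) :=
  (innerSL x).continuous

lemma norm_le_norm_innerSL (x : E) : ‖x‖ ≤ ‖innerSL (A := A) x‖ := by
  have h : ‖x‖ ^ 2 ≤ ‖innerSL (A := A) x‖ * ‖x‖ := by
    rw [norm_sq_eq (A := A), ← innerSL_apply]
    exact (innerSL x).le_opNorm x
  nlinarith [norm_nonneg x, norm_nonneg (innerSL (A := A) x)]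

lemma WeakTendsto.exists_norm_le [CompleteSpace E] {x : ℕ → E} {l : E}
    (h : WeakTendsto A x l) : ∃ M, ∀ n, ‖x n‖ ≤ M := by
  obtain ⟨C, hC⟩ := banach_steinhaus (g := fun n => innerSL (A := A) (x n)) fun z => by
    obtain ⟨C, hC⟩ := (h z).norm.bddAbove_range
    exact ⟨C, fun n => (norm_inner_symm (x n) z).trans_le (hC ⟨n, rfl⟩)⟩
  exact ⟨C, fun n => (norm_le_norm_innerSL (x n)).trans (hC n)⟩

lemma WeakTendsto.exists_tendsto_cesaroMean [CompleteSpace E] {x : ℕ → E} {l : E}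
    (h : WeakTendsto A x l) :
    ∃ φ : ℕ → ℕ, StrictMono φ ∧ Tendsto (cesaroMean (x ∘ φ)) atTop (𝓝 l) := by
  have hy : WeakTendsto A (fun n => x n - l) 0 := sub_self l ▸ h.sub_const l
  obtain ⟨M, hM⟩ := hy.exists_norm_le
  obtain ⟨φ, hφ, hsmall⟩ := hy.exists_strictMono_norm_inner_le
  refine ⟨φ, hφ, ?_⟩
  have hzero := tendsto_cesaroMean_zero_of_norm_sq_le
    (norm_sq_sum_range_le (A := A) (fun n => hM (φ n)) hsmall)
  have hshift : cesaroMean (x ∘ φ) = fun k => cesaroMean (fun n => x (φ n) - l) k + l := by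
    ext k
    rw [← cesaroMean_add_const]
    simp only [sub_add_cancel]
    rfl
  rw [hshift]
  simpa only [zero_add] using hzero.add_const l

lemma inner_eq_of_tendsto_cesaroMean {x : ℕ → E} {φ : ℕ → ℕ} (hφ : StrictMono φ) {l z : E}
    {L : A} (hl : Tendsto (cesaroMean (x ∘ φ)) atTop (𝓝 l))
    (hz : Tendsto (fun n => inner A z (x n)) atTop (𝓝 L)) : inner A z l = L := by
  refine tendsto_nhds_unique ((continuous_inner_right z).tendsto l |>.comp hl) ?_
  simpa only [Function.comp_def, inner_cesaroMean] using (hz.comp hφ.tendsto_atTop).cesaroMean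

end RightCStarModule

lemma MBS2On.exists_weakTendsto {S : Set E}
    (hS : ∀ z, ∃ s ∈ S, ∀ x ∈ S, inner A z x = inner A s x) (h : MBS2On A S) {x : ℕ → E}
    (hx : ∀ n, x n ∈ S) (hC : ∀ z ∈ S, CauchySeq fun n => inner A z (x n)) :
    ∃ l, WeakTendsto A x l := by
  obtain ⟨φ, hφ, l, hl⟩ := h x hx hC
  refine ⟨l, fun z => ?_⟩
  obtain ⟨s, hs, hzs⟩ := hS z
  have hzx : (fun n => inner A z (x n)) = fun n => inner A s (x n) :=
    funext fun n => hzs _ (hx n)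
  obtain ⟨L, hL⟩ := cauchySeq_tendsto_of_complete (hC s hs)
  rwa [inner_eq_of_tendsto_cesaroMean hφ hl (hzx ▸ hL), hzx]

lemma mbs2On_univ_iff [CompleteSpace E] : MBS2On A (Set.univ : Set E) ↔
    ∀ x : ℕ → E, (∀ z, CauchySeq fun n => inner A z (x n)) → ∃ l, WeakTendsto A x l := by
  refine ⟨fun h x hx => h.exists_weakTendsto (fun z => ⟨z, trivial, fun _ _ => rfl⟩)
    (fun _ => trivial) fun z _ => hx z, fun h x _ hx => ?_⟩
  obtain ⟨l, hl⟩ := h x fun z => hx z trivial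
  obtain ⟨φ, hφ, hφl⟩ := hl.exists_tendsto_cesaroMean
  exact ⟨φ, hφ, l, hφl⟩

theorem mBS2_direct_sum_general [CompleteSpace E] (V₁ V₂ : Submodule ℂ E)
    (horth : ∀ x ∈ V₁, ∀ y ∈ V₂, (inner A x y : A) = 0)
    (hsum : ∀ v : E, ∃ x ∈ V₁, ∃ y ∈ V₂, v = x + y) :
    MBS2On A (Set.univ : Set E) ↔ MBS2On A (V₁ : Set E) ∧ MBS2On A (V₂ : Set E) := by
  have horth' : ∀ y ∈ V₂, ∀ x ∈ V₁, (inner A y x : A) = 0 := fun y hy x hx => by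
    rw [← star_inner, horth x hx y hy, star_zero]
  have hV₁ := exists_mem_inner_eq_of_orthogonal horth' hsum
  have hV₂ := exists_mem_inner_eq_of_orthogonal horth fun v => by
    obtain ⟨x, hx, y, hy, rfl⟩ := hsum v
    exact ⟨y, hy, x, hx, add_comm x y⟩
  refine ⟨fun h => ⟨h.of_univ hV₁, h.of_univ hV₂⟩, fun ⟨h₁, h₂⟩ => mbs2On_univ_iff.2 ?_⟩
  intro x hx
  choose a ha b hb hab using fun n => hsum (x n)
  obtain ⟨l₁, hl₁⟩ := h₁.exists_weakTendsto hV₁ ha fun z hz => by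
    convert hx z using 2 with n
    rw [hab n, RightCStarModule.inner_add_right, horth z hz _ (hb n), add_zero]
  obtain ⟨l₂, hl₂⟩ := h₂.exists_weakTendsto hV₂ hb fun z hz => by
    convert hx z using 2 with n
    rw [hab n, RightCStarModule.inner_add_right, horth' z hz _ (ha n), zero_add]
  exact ⟨l₁ + l₂, by simpa only [← hab] using hl₁.add hl₂⟩

/-- Let a Hilbert C*-module `E` be the orthogonal direct sum of closed submodules `V₁` and
`V₂`. Then `E` has property (mBS2) iff both `V₁` and `V₂` do. -/
theorem mBS2_direct_sum [CompleteSpace E] (V₁ V₂ : Submodule ℂ E)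
    (h₁c : IsClosed (V₁ : Set E)) (h₂c : IsClosed (V₂ : Set E))
    (h₁s : ∀ (a : A), ∀ x ∈ V₁, MulOpposite.op a • x ∈ V₁)
    (h₂s : ∀ (a : A), ∀ x ∈ V₂, MulOpposite.op a • x ∈ V₂)
    (horth : ∀ x ∈ V₁, ∀ y ∈ V₂, (inner A x y : A) = 0)
    (hsum : ∀ v : E, ∃ x ∈ V₁, ∃ y ∈ V₂, v = x + y) :
    MBS2On A (Set.univ : Set E) ↔ MBS2On A (V₁ : Set E) ∧ MBS2On A (V₂ : Set E) :=
  mBS2_direct_sum_general V₁ V₂ horth hsum
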